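/- arXiv:2306.06714 — 5 statements merged into one kernel-verified Lean document; each statement's English description precedes it below -/
import Mathlib

section
/- For every n ≥ 2, the length (number of edges, counted with multiplicity) of a shortest walk in the complete graph K_n that visits every edge of K_n at least once equals (n²−n)/2 if n is odd, and (n²−2)/2 if n is even. -/
open SimpleGraph

/-- An `l`-track on `G`: a surjective function whose consecutive values are adjacent. -/
def IsTrack {V : Type*} (G : SimpleGraph V) {l : ℕ} (f : Fin l → V) : Prop :=
  Function.Surjective f ∧
    ∀ i : ℕ, ∀ hi : i + 1 < l, G.Adj (f ⟨i, Nat.lt_of_succ_lt hi⟩) (f ⟨i + 1, hi⟩)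

/-- A lazy `l`-track on `G`: consecutive values are adjacent or equal. -/
def IsLazyTrack {V : Type*} (G : SimpleGraph V) {l : ℕ} (f : Fin l → V) : Prop :=
  Function.Surjective f ∧
    ∀ i : ℕ, ∀ hi : i + 1 < l,
      G.Adj (f ⟨i, Nat.lt_of_succ_lt hi⟩) (f ⟨i + 1, hi⟩) ∨
        f ⟨i, Nat.lt_of_succ_lt hi⟩ = f ⟨i + 1, hi⟩

/-- The condition that every edge of `G` is traversed by `f`. -/
def SweepCond {V : Type*} (G : SimpleGraph V) {l : ℕ} (f : Fin l → V) : Prop :=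
  ∀ e ∈ G.edgeSet, ∃ i : ℕ, ∃ hi : i + 1 < l,
    e = s(f ⟨i, Nat.lt_of_succ_lt hi⟩, f ⟨i + 1, hi⟩)

/-- An `l`-sweep on `G`: an `l`-track traversing every edge. -/
def IsSweep {V : Type*} (G : SimpleGraph V) {l : ℕ} (f : Fin l → V) : Prop :=
  IsTrack G f ∧ SweepCond G f

/-- A lazy `l`-sweep on `G`: a lazy `l`-track traversing every edge. -/
def IsLazySweep {V : Type*} (G : SimpleGraph V) {l : ℕ} (f : Fin l → V) : Prop :=
  IsLazyTrack G f ∧ SweepCond G f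

/-- `f` and `g` are opposite: at each step exactly `f` moves iff `g` stays. -/
def IsOpposite {V : Type*} (G : SimpleGraph V) {l : ℕ} (f g : Fin l → V) : Prop :=
  ∀ i : ℕ, ∀ hi : i + 1 < l,
    (G.Adj (f ⟨i, Nat.lt_of_succ_lt hi⟩) (f ⟨i + 1, hi⟩) ↔
      g ⟨i, Nat.lt_of_succ_lt hi⟩ = g ⟨i + 1, hi⟩)

/-- The distance `m_G(f,g)`: minimal distance between simultaneous positions. -/
noncomputable def mDist {V : Type*} (G : SimpleGraph V) {l : ℕ} (f g : Fin l → V) : ℕ :=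
  sInf {d | ∃ i : Fin l, G.dist (f i) (g i) = d}

/-- Strong vertex span `σ⊠_V(G)`. -/
noncomputable def strongVertexSpan {V : Type*} (G : SimpleGraph V) : ℕ :=
  sSup {d | ∃ (l : ℕ) (f g : Fin l → V), IsLazyTrack G f ∧ IsLazyTrack G g ∧ mDist G f g = d}

/-- Direct vertex span `σ×_V(G)`. -/
noncomputable def directVertexSpan {V : Type*} (G : SimpleGraph V) : ℕ :=
  sSup {d | ∃ (l : ℕ) (f g : Fin l → V), IsTrack G f ∧ IsTrack G g ∧ mDist G f g = d}

/-- Cartesian vertex span `σ□_V(G)`. -/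
noncomputable def cartesianVertexSpan {V : Type*} (G : SimpleGraph V) : ℕ :=
  sSup {d | ∃ (l : ℕ) (f g : Fin l → V),
    IsLazyTrack G f ∧ IsLazyTrack G g ∧ IsOpposite G f g ∧ mDist G f g = d}

/-- Strong edge span `σ⊠_E(G)`. -/
noncomputable def strongEdgeSpan {V : Type*} (G : SimpleGraph V) : ℕ :=
  sSup {d | ∃ (l : ℕ) (f g : Fin l → V), IsLazySweep G f ∧ IsLazySweep G g ∧ mDist G f g = d}

/-- Direct edge span `σ×_E(G)`. -/
noncomputable def directEdgeSpan {V : Type*} (G : SimpleGraph V) : ℕ :=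
  sSup {d | ∃ (l : ℕ) (f g : Fin l → V), IsSweep G f ∧ IsSweep G g ∧ mDist G f g = d}

/-- Cartesian edge span `σ□_E(G)`. -/
noncomputable def cartesianEdgeSpan {V : Type*} (G : SimpleGraph V) : ℕ :=
  sSup {d | ∃ (l : ℕ) (f g : Fin l → V),
    IsLazySweep G f ∧ IsLazySweep G g ∧ IsOpposite G f g ∧ mDist G f g = d}

/-- `L⊠_V(G)`: minimal length of lazy tracks realizing the strong vertex span. -/
noncomputable def strongVertexL {V : Type*} (G : SimpleGraph V) : ℕ :=
  sInf {l | ∃ f g : Fin l → V,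
    IsLazyTrack G f ∧ IsLazyTrack G g ∧ mDist G f g = strongVertexSpan G}

/-- `L×_V(G)`. -/
noncomputable def directVertexL {V : Type*} (G : SimpleGraph V) : ℕ :=
  sInf {l | ∃ f g : Fin l → V,
    IsTrack G f ∧ IsTrack G g ∧ mDist G f g = directVertexSpan G}

/-- `L□_V(G)`. -/
noncomputable def cartesianVertexL {V : Type*} (G : SimpleGraph V) : ℕ :=
  sInf {l | ∃ f g : Fin l → V,
    IsLazyTrack G f ∧ IsLazyTrack G g ∧ IsOpposite G f g ∧ mDist G f g = cartesianVertexSpan G}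

/-- `L⊠_E(G)`. -/
noncomputable def strongEdgeL {V : Type*} (G : SimpleGraph V) : ℕ :=
  sInf {l | ∃ f g : Fin l → V,
    IsLazySweep G f ∧ IsLazySweep G g ∧ mDist G f g = strongEdgeSpan G}

/-- `L×_E(G)`. -/
noncomputable def directEdgeL {V : Type*} (G : SimpleGraph V) : ℕ :=
  sInf {l | ∃ f g : Fin l → V,
    IsSweep G f ∧ IsSweep G g ∧ mDist G f g = directEdgeSpan G}

/-- `L□_E(G)`. -/
noncomputable def cartesianEdgeL {V : Type*} (G : SimpleGraph V) : ℕ :=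
  sInf {l | ∃ f g : Fin l → V,
    IsLazySweep G f ∧ IsLazySweep G g ∧ IsOpposite G f g ∧ mDist G f g = cartesianEdgeSpan G}

open Finset

/-!
In a walk covering every edge of `G`, at least `deg x` of the traversed edges (counted with
multiplicity) contain the vertex `x`, and their number is even unless `x` is an endpoint.
Summing over `x` gives `length ≥ #E(G) + (#odd-degree vertices)/2 - 1`; for `K_n` this is
`n(n-1)/2` when `n` is odd and `(n² - 2)/2` when `n` is even, since then all `n` degrees are odd.

Both bounds are attained, by induction `n → n + 2`: to a covering walk of `K_n` ending at `v`,
append `v, a, 0, b, 1, a, 2, …, n - 1, c, c'` with `a, b` the new vertices and `{c, c'} = {a, b}`,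
which costs `2n + 2` edges. For odd `n` one edge is saved by starting from a closed walk at `u` and
closing the detour at `u`: `u, a, …, b, u`, the zigzag running over the other `n - 1` vertices.
-/

theorem Nat.two_mul_choose_two_add_self (n : ℕ) : 2 * n.choose 2 + n = n ^ 2 := by
  induction n with
  | zero => rfl
  | succ n ih => rw [Nat.choose_succ_succ', Nat.choose_one_right]; linear_combination ih

theorem Fin.eq_last_or_eq_castSucc_last_or_eq_castSucc_castSucc {n : ℕ} (z : Fin (n + 2)) :
    z = Fin.last (n + 1) ∨ z = (Fin.last n).castSucc ∨
      ∃ y : Fin n, z = y.castSucc.castSucc := by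
  rcases z.eq_castSucc_or_eq_last with ⟨z, rfl⟩ | rfl
  · rcases z.eq_castSucc_or_eq_last with ⟨y, rfl⟩ | rfl
    · exact .inr <| .inr ⟨y, rfl⟩
    · exact .inr <| .inl rfl
  · exact .inl rfl

namespace SimpleGraph

variable {V : Type*} {G : SimpleGraph V} {u v : V}

namespace Walk

def CoversEdges (p : G.Walk u v) : Prop := ∀ e ∈ G.edgeSet, e ∈ p.edges

theorem even_countP_edges_add_ite_add_ite [DecidableEq V] (p : G.Walk u v) (x : V) :
    Even (p.edges.countP (fun e => x ∈ e) + (if x = u then 1 else 0) +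
      if x = v then 1 else 0) := by
  induction p with
  | nil => split_ifs <;> simp
  | @cons a b _ hab p ih =>
    have hmem : (if x ∈ s(a, b) then 1 else 0) =
        (if x = a then 1 else 0) + if x = b then 1 else 0 := by
      have := hab.ne
      by_cases hxa : x = a <;> by_cases hxb : x = b <;> simp_all
    simp only [edges_cons, List.countP_cons, decide_eq_true_eq, hmem]
    obtain ⟨r, hr⟩ := ih
    exact ⟨r + if x = a then 1 else 0, by omega⟩

theorem sum_countP_edges [Fintype V] [DecidableEq V] (p : G.Walk u v) :
    ∑ x, p.edges.countP (fun e => x ∈ e) = 2 * p.length := by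
  induction p with
  | nil => simp
  | @cons a b _ hab p ih =>
    have hpair : ∑ x : V, (if x ∈ s(a, b) then 1 else 0) = 2 := by
      rw [sum_boole, Nat.cast_id, ← card_pair hab.ne]
      congr 1
      ext x
      simp
    simp only [edges_cons, List.countP_cons, decide_eq_true_eq, sum_add_distrib, ih, hpair,
      length_cons]
    ring

section Finite

variable [Fintype V] [DecidableEq V] [DecidableRel G.Adj]

theorem degree_le_countP_edges {p : G.Walk u v} (hp : p.CoversEdges) (x : V) :
    G.degree x ≤ p.edges.countP (fun e => x ∈ e) := by
  rw [← card_incidenceFinset_eq_degree, List.countP_eq_length_filter]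
  refine (card_le_card fun e he => ?_).trans (List.toFinset_card_le _)
  rw [mem_incidenceFinset] at he
  simpa [he.2] using hp e he.1

theorem card_edgeFinset_le_length {p : G.Walk u v} (hp : p.CoversEdges) :
    #G.edgeFinset ≤ p.length := by
  rw [← length_edges]
  refine (card_le_card fun e he => ?_).trans (List.toFinset_card_le _)
  simpa using hp e (mem_edgeFinset.mp he)

theorem card_odd_degree_add_two_mul_card_edgeFinset_le {p : G.Walk u v} (hp : p.CoversEdges) :
    #{x | Odd (G.degree x)} + 2 * #G.edgeFinset ≤ 2 * p.length + 2 := by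
  have hx (x : V) : G.degree x + (if Odd (G.degree x) then 1 else 0) ≤
      p.edges.countP (fun e => x ∈ e) + (if x = u then 1 else 0) + if x = v then 1 else 0 := by
    have hdeg := degree_le_countP_edges hp x
    have heven := p.even_countP_edges_add_ite_add_ite x
    by_cases hodd : Odd (G.degree x)
    · have : p.edges.countP (fun e => x ∈ e) + (if x = u then 1 else 0) +
          (if x = v then 1 else 0) ≠ G.degree x := fun h =>
        Nat.not_even_iff_odd.2 hodd (h ▸ heven)
      rw [if_pos hodd]
      omega
    · rw [if_neg hodd]
      omega
  have := sum_le_sum fun x (_ : x ∈ univ) => hx x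
  rw [sum_add_distrib, sum_add_distrib, sum_add_distrib, sum_countP_edges, sum_boole,
    sum_degrees_eq_twice_card_edges, sum_ite_eq', sum_ite_eq'] at this
  simp only [mem_univ, if_true, Nat.cast_id] at this
  omega

end Finite

/-- The walk `a, x 0, b, x 1, a, x 2, …, x (k - 1), c, c'` with `{c, c'} = {a, b}`. -/
theorem exists_zigzag_walk {a b : V} (hab : G.Adj a b) {k : ℕ} (x : Fin k → V)
    (ha : ∀ i, G.Adj a (x i)) (hb : ∀ i, G.Adj b (x i)) :
    ∃ w : G.Walk a (if Even k then b else a), w.length = 2 * k + 1 ∧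
      s(a, b) ∈ w.edges ∧ ∀ i, s(a, x i) ∈ w.edges ∧ s(b, x i) ∈ w.edges := by
  induction k generalizing a b with
  | zero => exact ⟨cons hab nil, rfl, by simp, fun i => i.elim0⟩
  | succ k ih =>
    obtain ⟨w, hlen, hwab, hwx⟩ :=
      ih hab.symm (x ∘ Fin.succ) (fun i => hb i.succ) (fun i => ha i.succ)
    have hend : (if Even k then a else b) = if Even (k + 1) then b else a := by
      by_cases hk : Even k <;> simp [hk, Nat.even_add_one]
    refine ⟨(cons (ha 0) (cons (hb 0).symm w)).copy rfl hend, ?_, ?_, ?_⟩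
    · simp only [length_copy, length_cons, hlen]
      ring
    · simp only [edges_copy, edges_cons, List.mem_cons]
      exact .inr <| .inr <| Sym2.eq_swap ▸ hwab
    · simp only [edges_copy, edges_cons, List.mem_cons]
      refine Fin.cases ⟨.inl rfl, .inr <| .inl Sym2.eq_swap⟩ fun i => ?_
      exact ⟨.inr <| .inr (hwx i).2, .inr <| .inr (hwx i).1⟩

end Walk

open Walk

theorem Walk.coversEdges_top_fin_add_two {n : ℕ} {u v : Fin (n + 2)}
    (w : (⊤ : SimpleGraph (Fin (n + 2))).Walk u v)
    (hold : ∀ x y : Fin n, x ≠ y → s(x.castSucc.castSucc, y.castSucc.castSucc) ∈ w.edges)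
    (ha : ∀ x : Fin n, s((Fin.last n).castSucc, x.castSucc.castSucc) ∈ w.edges)
    (hb : ∀ x : Fin n, s(Fin.last (n + 1), x.castSucc.castSucc) ∈ w.edges)
    (hab : s((Fin.last n).castSucc, Fin.last (n + 1)) ∈ w.edges) :
    w.CoversEdges := by
  refine Sym2.ind fun x y hxy => ?_
  rw [SimpleGraph.mem_edgeSet, top_adj] at hxy
  rcases x.eq_last_or_eq_castSucc_last_or_eq_castSucc_castSucc with rfl | rfl | ⟨x, rfl⟩ <;>
  rcases y.eq_last_or_eq_castSucc_last_or_eq_castSucc_castSucc with rfl | rfl | ⟨y, rfl⟩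
  all_goals first
    | exact absurd rfl hxy
    | exact hab | exact ha y | exact hb y
    | rw [Sym2.eq_swap]; first | exact hab | exact ha x | exact hb x
    | exact hold x y fun h => hxy (h ▸ rfl)

theorem top_adj_castSucc_last_castSucc_castSucc {n : ℕ} (x : Fin n) :
    (⊤ : SimpleGraph (Fin (n + 2))).Adj (Fin.last n).castSucc x.castSucc.castSucc := by
  simp only [top_adj, ne_eq, Fin.ext_iff, Fin.val_castSucc, Fin.val_last]
  omega

theorem top_adj_last_castSucc_castSucc {n : ℕ} (x : Fin n) :
    (⊤ : SimpleGraph (Fin (n + 2))).Adj (Fin.last (n + 1)) x.castSucc.castSucc := by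
  simp only [top_adj, ne_eq, Fin.ext_iff, Fin.val_castSucc, Fin.val_last]
  omega

theorem top_adj_castSucc_last_last (n : ℕ) :
    (⊤ : SimpleGraph (Fin (n + 2))).Adj (Fin.last n).castSucc (Fin.last (n + 1)) := by
  simp only [top_adj, ne_eq, Fin.ext_iff, Fin.val_castSucc, Fin.val_last]
  omega

abbrev castSuccCastSuccHom (n : ℕ) :
    (⊤ : SimpleGraph (Fin n)) →g (⊤ : SimpleGraph (Fin (n + 2))) :=
  (Embedding.completeGraph (Fin.castSuccEmb.trans Fin.castSuccEmb)).toHom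

theorem Walk.mem_edges_map_castSuccCastSuccHom {n : ℕ} {u v : Fin n}
    {w : (⊤ : SimpleGraph (Fin n)).Walk u v} (hw : w.CoversEdges) {x y : Fin n} (hxy : x ≠ y) :
    s(x.castSucc.castSucc, y.castSucc.castSucc) ∈ (w.map (castSuccCastSuccHom n)).edges := by
  rw [edges_map]
  exact List.mem_map_of_mem (f := Sym2.map _) (hw s(x, y) hxy)

theorem exists_coversEdges_fin_add_two {n : ℕ} {u v : Fin n}
    (w : (⊤ : SimpleGraph (Fin n)).Walk u v) (hw : w.CoversEdges) :
    ∃ (u' v' : Fin (n + 2)) (w' : (⊤ : SimpleGraph (Fin (n + 2))).Walk u' v'),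
      w'.CoversEdges ∧ w'.length = w.length + (2 * n + 2) := by
  obtain ⟨z, hzlen, hzab, hzx⟩ := exists_zigzag_walk (top_adj_castSucc_last_last n)
    (fun x : Fin n => x.castSucc.castSucc) top_adj_castSucc_last_castSucc_castSucc
    top_adj_last_castSucc_castSucc
  have hva : (⊤ : SimpleGraph (Fin (n + 2))).Adj (castSuccCastSuccHom n v)
      (Fin.last n).castSucc :=
    (top_adj_castSucc_last_castSucc_castSucc v).symm
  refine ⟨_, _, (w.map (castSuccCastSuccHom n)).append (cons hva z), ?_, ?_⟩
  · refine coversEdges_top_fin_add_two _ (fun x y hxy => ?_) (fun x => ?_) (fun x => ?_) ?_ <;>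
      simp only [edges_append, edges_cons, List.mem_append, List.mem_cons]
    · exact .inl (mem_edges_map_castSuccCastSuccHom hw hxy)
    · exact .inr <| .inr (hzx x).1
    · exact .inr <| .inr (hzx x).2
    · exact .inr <| .inr hzab
  · simp only [length_append, length_map, Walk.length_cons, hzlen]

theorem exists_closed_coversEdges_fin_add_two {m : ℕ} (hm : Even m) {u : Fin (m + 1)}
    (w : (⊤ : SimpleGraph (Fin (m + 1))).Walk u u) (hw : w.CoversEdges) :
    ∃ (u' : Fin (m + 3)) (w' : (⊤ : SimpleGraph (Fin (m + 3))).Walk u' u'),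
      w'.CoversEdges ∧ w'.length = w.length + (2 * m + 3) := by
  obtain ⟨z, hzlen, hzab, hzx⟩ := exists_zigzag_walk (top_adj_castSucc_last_last (m + 1))
    (fun j : Fin m => (u.succAbove j).castSucc.castSucc)
    (fun j => top_adj_castSucc_last_castSucc_castSucc _) (fun j => top_adj_last_castSucc_castSucc _)
  have hua : (⊤ : SimpleGraph (Fin (m + 3))).Adj (castSuccCastSuccHom (m + 1) u)
      (Fin.last (m + 1)).castSucc :=
    (top_adj_castSucc_last_castSucc_castSucc u).symm
  have hbu : (⊤ : SimpleGraph (Fin (m + 3))).Adj (Fin.last (m + 2))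
      (castSuccCastSuccHom (m + 1) u) :=
    top_adj_last_castSucc_castSucc u
  refine ⟨_, (w.map (castSuccCastSuccHom (m + 1))).append
    (cons hua ((z.copy rfl (if_pos hm)).concat hbu)), ?_, ?_⟩
  · refine coversEdges_top_fin_add_two _ (fun x y hxy => ?_) (fun x => ?_) (fun x => ?_) ?_ <;>
      simp only [edges_append, edges_cons, edges_concat, edges_copy, List.concat_eq_append,
        List.mem_append, List.mem_cons]
    · exact .inl (mem_edges_map_castSuccCastSuccHom hw hxy)
    · rcases u.eq_self_or_eq_succAbove x with rfl | ⟨j, rfl⟩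
      · exact .inr <| .inl Sym2.eq_swap
      · exact .inr <| .inr <| .inl (hzx j).1
    · rcases u.eq_self_or_eq_succAbove x with rfl | ⟨j, rfl⟩
      · exact .inr <| .inr <| .inr <| .inl rfl
      · exact .inr <| .inr <| .inl (hzx j).2
    · exact .inr <| .inr <| .inl hzab
  · simp only [length_append, length_map, Walk.length_cons, length_concat, length_copy, hzlen]

theorem isLeast_length_coversEdges_top_odd (k : ℕ) :
    IsLeast {l | ∃ (u v : Fin (2 * k + 1)) (w : (⊤ : SimpleGraph (Fin (2 * k + 1))).Walk u v),
      w.CoversEdges ∧ w.length = l} ((2 * k + 1).choose 2) := by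
  refine ⟨?_, fun l ⟨u, v, w, hw, hl⟩ => ?_⟩
  · suffices ∃ (u : Fin (2 * k + 1)) (w : (⊤ : SimpleGraph (Fin (2 * k + 1))).Walk u u),
        w.CoversEdges ∧ w.length = (2 * k + 1).choose 2 by
      obtain ⟨u, w, hw, hl⟩ := this
      exact ⟨u, u, w, hw, hl⟩
    induction k with
    | zero =>
      refine ⟨0, nil, Sym2.ind fun x y hxy => ?_, rfl⟩
      exact absurd (Subsingleton.elim (α := Fin 1) x y) hxy
    | succ k ih =>
      obtain ⟨u, w, hw, hl⟩ := ih
      obtain ⟨u', w', hw', hl'⟩ := exists_closed_coversEdges_fin_add_two (even_two_mul k) w hw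
      refine ⟨u', w', hw', ?_⟩
      have := (2 * k + 1).two_mul_choose_two_add_self
      have := (2 * (k + 1) + 1).two_mul_choose_two_add_self
      rw [hl', hl]
      nlinarith
  · have := card_edgeFinset_le_length hw
    rwa [card_edgeFinset_top_eq_card_choose_two, Fintype.card_fin, hl] at this

theorem isLeast_length_coversEdges_top_even (k : ℕ) :
    IsLeast {l | ∃ (u v : Fin (2 * k + 2)) (w : (⊤ : SimpleGraph (Fin (2 * k + 2))).Walk u v),
      w.CoversEdges ∧ w.length = l} ((2 * k + 2).choose 2 + k) := by
  refine ⟨?_, fun l ⟨u, v, w, hw, hl⟩ => ?_⟩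
  · induction k with
    | zero =>
      refine ⟨0, 1, cons (by decide) nil, Sym2.ind fun x y hxy => ?_, rfl⟩
      fin_cases x <;> fin_cases y <;> simp_all
    | succ k ih =>
      obtain ⟨_, _, w, hw, hl⟩ := ih
      obtain ⟨u', v', w', hw', hl'⟩ := exists_coversEdges_fin_add_two w hw
      refine ⟨u', v', w', hw', ?_⟩
      have := (2 * k + 2).two_mul_choose_two_add_self
      have := (2 * (k + 1) + 2).two_mul_choose_two_add_self
      rw [hl', hl]
      nlinarith
  · have hodd : #{x : Fin (2 * k + 2) | Odd ((⊤ : SimpleGraph _).degree x)} = 2 * k + 2 := by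
      simp
    have := card_odd_degree_add_two_mul_card_edgeFinset_le hw
    rw [hodd, card_edgeFinset_top_eq_card_choose_two, Fintype.card_fin] at this
    omega

end SimpleGraph

theorem stmt1 (n : ℕ) (hn : 2 ≤ n) :
    IsLeast {k : ℕ | ∃ (u v : Fin n) (w : (⊤ : SimpleGraph (Fin n)).Walk u v),
        (∀ e ∈ (⊤ : SimpleGraph (Fin n)).edgeSet, e ∈ w.edges) ∧ w.length = k}
      (if Odd n then (n ^ 2 - n) / 2 else (n ^ 2 - 2) / 2) := by
  rcases n.even_or_odd with hn' | hn'
  · obtain ⟨k, rfl⟩ : ∃ k, n = 2 * k + 2 := ⟨n / 2 - 1, by grind⟩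
    have := (2 * k + 2).two_mul_choose_two_add_self
    rw [if_neg (Nat.not_odd_iff_even.2 hn'),
      show ((2 * k + 2) ^ 2 - 2) / 2 = (2 * k + 2).choose 2 + k by omega]
    exact isLeast_length_coversEdges_top_even k
  · obtain ⟨k, rfl⟩ := hn'
    have := (2 * k + 1).two_mul_choose_two_add_self
    rw [if_pos (odd_two_mul_add_one k),
      show ((2 * k + 1) ^ 2 - (2 * k + 1)) / 2 = (2 * k + 1).choose 2 by omega]
    exact isLeast_length_coversEdges_top_odd k
end

section
/- For each n ∈ ℕ with n ≥ 1, there exists a k-sweep on the complete graph K_n, where k = (n²−n+2)/2 if n is odd and k = n²/2 if n is even. -/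
open SimpleGraph

/-!
For odd `n` the sweep is an Euler circuit of `K_n`; for even `n` it is a trail covering every edge
with `n / 2 - 1` edges traversed twice. Both are built by induction from `n` to `n + 2`: the sweep
of `K_n` ends at `0`, and is continued by a closed walk from `0` that zigzags between the old
vertices `1, …, n - 1` and the new vertices `n`, `n + 1` alternately, then returns to `0` through
the few new edges the zigzag misses (for even `n` this costs the one repeated edge `{n, n + 1}`).
-/

namespace List

variable {α : Type*}

def Traverses (l : List α) (u v : α) : Prop :=
  [u, v] <:+: l ∨ [v, u] <:+: l

theorem Traverses.symm {l : List α} {u v : α} (h : l.Traverses u v) : l.Traverses v u :=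
  Or.symm h

theorem Traverses.mono {l₁ l₂ : List α} {u v : α} (h : l₁.Traverses u v) (hl : l₁ <:+: l₂) :
    l₂.Traverses u v :=
  h.imp (·.trans hl) (·.trans hl)

theorem Traverses.left_mem {l : List α} {u v : α} (h : l.Traverses u v) : u ∈ l :=
  h.elim (·.subset (mem_cons_self ..)) (·.subset (mem_of_mem_tail (mem_cons_self ..)))

theorem Traverses.of_map {β : Type*} {f : α → β} (hf : Function.Injective f) {l : List α}
    {u v : α} (h : (l.map f).Traverses (f u) (f v)) : l.Traverses u v := by
  have key : ∀ {x y : α}, [f x, f y] <:+: l.map f → [x, y] <:+: l := by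
    intro x y hxy
    obtain ⟨l', hl', hmap⟩ := infix_map_iff.1 hxy
    rwa [show l' = [x, y] from map_injective_iff.2 hf (by simpa using hmap.symm)] at hl'
  exact h.imp key key

theorem exists_getElem_of_pair_infix {l : List α} {u v : α} (h : [u, v] <:+: l) :
    ∃ i, ∃ hi : i + 1 < l.length, l[i] = u ∧ l[i + 1] = v := by
  obtain ⟨k, hk, hget⟩ := infix_iff_getElem?.1 h
  have h0 := hget 0 (by simp)
  have h1 := hget 1 (by simp)
  simp only [length_cons, length_nil] at hk
  refine ⟨k, by omega, ?_, ?_⟩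
  · simpa [getElem?_eq_getElem (show k < l.length by omega)] using h0
  · simpa [Nat.add_comm 1 k, getElem?_eq_getElem (show k + 1 < l.length by omega)] using h1

end List

open List

theorem isSweep_get {V : Type*} {G : SimpleGraph V} {l : List V} (hchain : l.IsChain G.Adj)
    (hmem : ∀ v, v ∈ l) (htrav : ∀ u v, G.Adj u v → l.Traverses u v) : IsSweep G l.get := by
  refine ⟨⟨fun v => mem_iff_get.1 (hmem v), fun i hi => isChain_iff_getElem.1 hchain i hi⟩, ?_⟩
  intro e he
  induction e using Sym2.ind with
  | _ u v =>
    rcases htrav u v he with h | h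
    · obtain ⟨i, hi, hu, hv⟩ := exists_getElem_of_pair_infix h
      exact ⟨i, hi, by simp [hu, hv]⟩
    · obtain ⟨i, hi, hv, hu⟩ := exists_getElem_of_pair_infix h
      exact ⟨i, hi, by simp [hu, hv, Sym2.eq_swap]⟩

section Zigzag

variable {α : Type*}

-- `[a 0, b 0, a 1, b 1, …, b (m - 1), a m]`
def zigzag (a b : ℕ → α) : ℕ → List α
  | 0 => [a 0]
  | m + 1 => a 0 :: b 0 :: zigzag (fun i => a (i + 1)) (fun i => b (i + 1)) m

theorem zigzag_eq_cons (a b : ℕ → α) (m : ℕ) : zigzag a b m = a 0 :: (zigzag a b m).tail := by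
  cases m <;> rfl

theorem length_zigzag (a b : ℕ → α) (m : ℕ) : (zigzag a b m).length = 2 * m + 1 := by
  induction m generalizing a b with
  | zero => rfl
  | succ m ih => simp only [zigzag, length_cons, ih]; ring

theorem zigzag_eq_append (a b : ℕ → α) (m : ℕ) : ∃ p, zigzag a b m = p ++ [a m] := by
  induction m generalizing a b with
  | zero => exact ⟨[], rfl⟩
  | succ m ih =>
    obtain ⟨p, hp⟩ := ih (fun i => a (i + 1)) (fun i => b (i + 1))
    exact ⟨a 0 :: b 0 :: p, by simp [zigzag, hp]⟩

theorem mem_zigzag {a b : ℕ → α} {m : ℕ} {x : α} (hx : x ∈ zigzag a b m) :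
    (∃ i ≤ m, a i = x) ∨ ∃ i < m, b i = x := by
  induction m generalizing a b with
  | zero => simp_all [zigzag]
  | succ m ih =>
    simp only [zigzag, mem_cons] at hx
    rcases hx with rfl | rfl | hx
    · exact .inl ⟨0, by omega, rfl⟩
    · exact .inr ⟨0, by omega, rfl⟩
    · rcases ih hx with ⟨i, hi, rfl⟩ | ⟨i, hi, rfl⟩
      · exact .inl ⟨i + 1, by omega, rfl⟩
      · exact .inr ⟨i + 1, by omega, rfl⟩

theorem isChain_zigzag {R : α → α → Prop} {a b : ℕ → α} {m : ℕ}
    (h : ∀ i < m, R (a i) (b i) ∧ R (b i) (a (i + 1))) : (zigzag a b m).IsChain R := by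
  induction m generalizing a b with
  | zero => simp [zigzag]
  | succ m ih =>
    rw [zigzag, zigzag_eq_cons, isChain_cons_cons, isChain_cons_cons]
    exact ⟨(h 0 m.succ_pos).1, (h 0 m.succ_pos).2,
      zigzag_eq_cons _ _ m ▸ ih fun i hi => h (i + 1) (by omega)⟩

theorem infix_zigzag (a b : ℕ → α) {i m : ℕ} (hi : i < m) :
    [a i, b i, a (i + 1)] <:+: zigzag a b m := by
  induction m generalizing a b i with
  | zero => omega
  | succ m ih =>
    cases i with
    | zero =>
      rw [zigzag, zigzag_eq_cons]
      exact ⟨[], _, rfl⟩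
    | succ i =>
      exact infix_cons (infix_cons (ih (fun j => a (j + 1)) (fun j => b (j + 1)) (by omega)))

end Zigzag

-- `0, n, 1, n + 1, 2, n, …, n - 1`, then back to `0` through the new edges not yet traversed
def extensionWalk (n : ℕ) : List ℕ :=
  zigzag (fun i => i) (fun i => n + i % 2) (n - 1) ++
    if Odd n then [n, n + 1, 0] else [n + 1, n, n + 1, 0]

section ExtensionWalk

variable (n : ℕ)

theorem extensionWalk_eq_cons : extensionWalk n = 0 :: (extensionWalk n).tail := by
  rw [extensionWalk, zigzag_eq_cons]
  rfl

theorem extensionWalk_eq_append_zero : ∃ p, extensionWalk n = p ++ [0] := by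
  unfold extensionWalk
  split_ifs
  · exact ⟨_, (append_assoc _ [n, n + 1] [0]).symm⟩
  · exact ⟨_, (append_assoc _ [n + 1, n, n + 1] [0]).symm⟩

theorem length_extensionWalk (hn : 1 ≤ n) :
    (extensionWalk n).length = if Odd n then 2 * n + 2 else 2 * n + 3 := by
  unfold extensionWalk
  split_ifs <;> simp only [length_append, length_zigzag, length_cons, length_nil] <;> omega

theorem lt_of_mem_extensionWalk {m : ℕ} (hm : m ∈ extensionWalk n) : m < n + 2 := by
  unfold extensionWalk at hm
  rcases mem_append.1 hm with hm | hm
  · rcases mem_zigzag hm with ⟨i, hi, rfl⟩ | ⟨i, -, rfl⟩ <;> omega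
  · split_ifs at hm <;> simp only [mem_cons, not_mem_nil, or_false] at hm <;> omega

theorem isChain_extensionWalk : (extensionWalk n).IsChain (· ≠ ·) := by
  obtain ⟨p, hp⟩ := zigzag_eq_append (fun i => i) (fun i => n + i % 2) (n - 1)
  have hzig : (zigzag (fun i => i) (fun i => n + i % 2) (n - 1)).IsChain (· ≠ ·) :=
    isChain_zigzag fun i hi => ⟨by omega, by omega⟩
  unfold extensionWalk
  rw [hp] at hzig ⊢
  refine hzig.append_overlap ?_ (cons_ne_nil _ _)
  split_ifs with hodd
  · have := hodd.pos
    simp only [singleton_append, isChain_cons_cons, isChain_singleton, ne_eq, and_true]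
    omega
  · simp

theorem traverses_extensionWalk {u v : ℕ} (hu : u < n + 2) (hv : v < n + 2) (huv : u ≠ v)
    (hnew : n ≤ u) : (extensionWalk n).Traverses u v := by
  obtain ⟨p, hp⟩ := zigzag_eq_append (fun i => i) (fun i => n + i % 2) (n - 1)
  have hzig : ∀ i < n - 1, (extensionWalk n).Traverses i (n + i % 2) ∧
      (extensionWalk n).Traverses (n + i % 2) (i + 1) := fun i hi =>
    have h := (infix_zigzag (fun i => i) (fun i => n + i % 2) hi).trans infix_append_left
    ⟨.inl ((infix_append [] _ [i + 1]).trans h), .inl ((infix_append [i] _ []).trans h)⟩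
  have hclose : ((n - 1) :: if Odd n then [n, n + 1, 0] else [n + 1, n, n + 1, 0]) <:+:
      extensionWalk n := ⟨p, [], by simp [extensionWalk, hp]⟩
  -- The zigzag joins `n + p` to each old `v` with `v ≡ p` or `v - 1 ≡ p (mod 2)`, except to
  -- `v = n - 1` when `n - 1 ≡ p` and to `v = 0` when `p = 1`: those come from the closing segment.
  rcases lt_or_ge v n with hvn | hvn
  · by_cases hpar : v % 2 = u - n
    · by_cases hlast : v + 1 < n
      · obtain rfl : u = n + v % 2 := by omega
        exact (hzig v (by omega)).1.symm
      · obtain rfl : v = n - 1 := by omega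
        refine .inr (.trans ?_ hclose)
        split_ifs with hodd
        · obtain rfl : n = u := by have := Nat.odd_iff.1 hodd; omega
          exact ⟨[], [n + 1, 0], rfl⟩
        · obtain rfl : u = n + 1 := by have := Nat.not_odd_iff.1 hodd; omega
          exact ⟨[], [n, n + 1, 0], rfl⟩
    · by_cases hfirst : 1 ≤ v
      · obtain rfl : u = n + (v - 1) % 2 := by omega
        simpa [Nat.sub_add_cancel hfirst] using (hzig (v - 1) (by omega)).2
      · obtain rfl : v = 0 := by omega
        obtain rfl : u = n + 1 := by omega
        refine .inl (.trans ?_ hclose)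
        split_ifs
        · exact ⟨[n - 1, n], [], rfl⟩
        · exact ⟨[n - 1, n + 1, n], [], rfl⟩
  · have hpair : (extensionWalk n).Traverses n (n + 1) := by
      split_ifs at hclose
      · exact .inl ((infix_append [n - 1] _ [0]).trans hclose)
      · exact .inr ((infix_append [n - 1] _ [n + 1, 0]).trans hclose)
    rcases (show u = n ∧ v = n + 1 ∨ u = n + 1 ∧ v = n by omega) with ⟨rfl, rfl⟩ | ⟨rfl, rfl⟩
    · exact hpair
    · exact hpair.symm

end ExtensionWalk

def sweepList : ℕ → List ℕ
  | 0 => []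
  | 1 => [0]
  | 2 => [1, 0]
  | n + 3 => sweepList (n + 1) ++ (extensionWalk (n + 1)).tail

theorem append_zero_append_tail_extensionWalk (p : List ℕ) (n : ℕ) :
    p ++ [0] ++ (extensionWalk n).tail = p ++ extensionWalk n := by
  rw [extensionWalk_eq_cons n, append_assoc, singleton_append, tail_cons]

theorem sweepList_eq_append_zero {n : ℕ} (hn : 1 ≤ n) : ∃ p, sweepList n = p ++ [0] := by
  induction n using sweepList.induct with
  | case1 => omega
  | case2 => exact ⟨[], rfl⟩
  | case3 => exact ⟨[1], rfl⟩
  | case4 n ih =>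
    obtain ⟨p, hp⟩ := ih (by omega)
    obtain ⟨q, hq⟩ := extensionWalk_eq_append_zero (n + 1)
    refine ⟨p ++ q, ?_⟩
    rw [sweepList, hp, append_zero_append_tail_extensionWalk, hq, append_assoc]

theorem sweepList_add_three (n : ℕ) :
    ∃ p, sweepList (n + 1) = p ++ [0] ∧ sweepList (n + 3) = p ++ extensionWalk (n + 1) := by
  obtain ⟨p, hp⟩ := sweepList_eq_append_zero (Nat.le_add_left 1 n)
  exact ⟨p, hp, by rw [sweepList, hp, append_zero_append_tail_extensionWalk]⟩

theorem length_sweepList (n : ℕ) :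
    (sweepList n).length = if Odd n then (n ^ 2 - n + 2) / 2 else n ^ 2 / 2 := by
  induction n using sweepList.induct with
  | case1 | case2 | case3 => rfl
  | case4 n ih =>
    obtain ⟨p, hp, hp3⟩ := sweepList_add_three n
    rw [hp, length_append, length_singleton] at ih
    rw [hp3, length_append, length_extensionWalk _ (by omega)]
    have hsq : (n + 3) ^ 2 = (n + 1) ^ 2 + 4 * (n + 1) + 4 := by ring
    have hle : n + 1 ≤ (n + 1) ^ 2 := Nat.le_self_pow two_ne_zero _
    have hpar : (n + 1) ^ 2 % 2 = (n + 1) % 2 := by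
      rcases Nat.mod_two_eq_zero_or_one (n + 1) with h | h <;> simp [Nat.pow_mod, h]
    rw [hsq]
    generalize (n + 1) ^ 2 = s at *
    simp only [Nat.odd_iff] at ih ⊢
    split_ifs at ih ⊢ <;> omega

theorem lt_of_mem_sweepList {n m : ℕ} (hm : m ∈ sweepList n) : m < n := by
  induction n using sweepList.induct with
  | case1 => simp [sweepList] at hm
  | case2 => simp_all [sweepList]
  | case3 => simp [sweepList] at hm; omega
  | case4 n ih =>
    obtain ⟨p, hp, hp3⟩ := sweepList_add_three n
    rw [hp3, mem_append] at hm
    rcases hm with hm | hm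
    · have := ih (hp ▸ mem_append_left _ hm); omega
    · exact lt_of_mem_extensionWalk _ hm

theorem isChain_sweepList (n : ℕ) : (sweepList n).IsChain (· ≠ ·) := by
  induction n using sweepList.induct with
  | case1 | case2 | case3 => simp [sweepList]
  | case4 n ih =>
    obtain ⟨p, hp, hp3⟩ := sweepList_add_three n
    rw [hp3, extensionWalk_eq_cons, ← singleton_append, ← append_assoc]
    exact IsChain.append_overlap (hp ▸ ih)
      (extensionWalk_eq_cons _ ▸ isChain_extensionWalk _) (cons_ne_nil _ _)

theorem traverses_sweepList {n u v : ℕ} (hu : u < n) (hv : v < n) (huv : u ≠ v) :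
    (sweepList n).Traverses u v := by
  induction n using sweepList.induct with
  | case1 => omega
  | case2 => omega
  | case3 =>
    obtain ⟨rfl, rfl⟩ | ⟨rfl, rfl⟩ : u = 0 ∧ v = 1 ∨ u = 1 ∧ v = 0 := by omega
    exacts [.inr (infix_refl _), .inl (infix_refl _)]
  | case4 n ih =>
    obtain ⟨p, hp, hp3⟩ := sweepList_add_three n
    have hpre : sweepList (n + 1) <:+: sweepList (n + 3) := infix_append_left
    have hsuf : extensionWalk (n + 1) <:+: sweepList (n + 3) := hp3 ▸ infix_append_right
    rcases lt_or_ge u (n + 1) with hun | hun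
    · rcases lt_or_ge v (n + 1) with hvn | hvn
      · exact (ih hun hvn).mono hpre
      · exact (traverses_extensionWalk _ hv hu huv.symm hvn).symm.mono hsuf
    · exact (traverses_extensionWalk _ hu hv huv hun).mono hsuf

theorem mem_sweepList {n m : ℕ} (hm : m < n) : m ∈ sweepList n := by
  rcases Nat.lt_or_ge n 2 with hn | hn
  · obtain ⟨rfl, rfl⟩ : n = 1 ∧ m = 0 := by omega
    exact mem_singleton_self 0
  · obtain ⟨v, hv, hmv⟩ : ∃ v < n, m ≠ v :=
      ⟨if m = 0 then 1 else 0, by split_ifs <;> omega, by split_ifs <;> omega⟩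
    exact (traverses_sweepList hm hv hmv).left_mem

theorem stmt2_general (n : ℕ) :
    ∃ f : Fin (if Odd n then (n ^ 2 - n + 2) / 2 else n ^ 2 / 2) → Fin n,
      IsSweep (⊤ : SimpleGraph (Fin n)) f := by
  obtain ⟨L, hL⟩ : ∃ L : List (Fin n), L.map Fin.val = sweepList n :=
    ⟨(sweepList n).pmap Fin.mk fun _ => lt_of_mem_sweepList, by simp [map_pmap]⟩
  rw [← length_sweepList, ← hL, length_map]
  refine ⟨L.get, isSweep_get ?_ (fun v => ?_) fun u v huv => ?_⟩
  · have := isChain_sweepList n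
    rw [← hL, isChain_map] at this
    exact this.imp fun a b hab => by simpa [Fin.val_inj] using hab
  · have := mem_sweepList v.isLt
    rw [← hL] at this
    exact (mem_map_of_injective Fin.val_injective).1 this
  · exact .of_map Fin.val_injective (hL ▸ traverses_sweepList u.isLt v.isLt (Fin.val_ne_of_ne huv))

theorem stmt2 (n : ℕ) (hn : 1 ≤ n) :
    ∃ f : Fin (if Odd n then (n ^ 2 - n + 2) / 2 else n ^ 2 / 2) → Fin n,
      IsSweep (⊤ : SimpleGraph (Fin n)) f :=
  stmt2_general n
end

section
/- If G is a tree (a finite connected acyclic simple graph), then σ⊠_V(G)=σ⊠_E(G), σ×_V(G)=σ×_E(G), and σ□_V(G)=σ□_E(G). -/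
open SimpleGraph

/-! In an acyclic graph every edge `uv` is a bridge, so the only way a lazy track can get from
a visit of `u` to a visit of `v` is by traversing `uv` itself. Hence on a tree every lazy track
is a lazy sweep and every track is a sweep, and each vertex span is the supremum of the same set
as the corresponding edge span. -/

section

variable {V : Type*} {G : SimpleGraph V} {l : ℕ} {f : Fin l → V}

theorem SimpleGraph.IsAcyclic.adj_of_le_of_reachable (hG : G.IsAcyclic) {H : SimpleGraph V}
    (hHG : H ≤ G) {u v : V} (huv : G.Adj u v) (hr : H.Reachable u v) : H.Adj u v := by
  by_contra hH
  have hle : H ≤ G.deleteEdges {s(u, v)} := by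
    refine fun a b hab => deleteEdges_adj.mpr ⟨hHG hab, fun he => hH ?_⟩
    rcases Sym2.eq_iff.mp he with ⟨rfl, rfl⟩ | ⟨rfl, rfl⟩
    exacts [hab, hab.symm]
  exact isAcyclic_iff_forall_adj_isBridge.mp hG huv (hr.mono hle)

def stepGraph (f : Fin l → V) : SimpleGraph V :=
  fromEdgeSet {e | ∃ i : ℕ, ∃ hi : i + 1 < l, e = s(f ⟨i, Nat.lt_of_succ_lt hi⟩, f ⟨i + 1, hi⟩)}

theorem reachable_of_forall_reachable_succ {H : SimpleGraph V}
    (h : ∀ i : ℕ, ∀ hi : i + 1 < l, H.Reachable (f ⟨i, Nat.lt_of_succ_lt hi⟩) (f ⟨i + 1, hi⟩))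
    (i j : Fin l) : H.Reachable (f i) (f j) := by
  suffices key : ∀ i j : Fin l, i ≤ j → H.Reachable (f i) (f j) from
    (le_total i j).elim (key i j) fun hji => (key j i hji).symm
  rintro i ⟨j, hj⟩ hij
  induction j with
  | zero => rw [show i = ⟨0, hj⟩ from Fin.ext (Nat.le_zero.mp hij)]
  | succ n ih =>
    rcases hij.lt_or_eq with hlt | rfl
    · have hin : i ≤ ⟨n, by omega⟩ := by simp only [Fin.lt_def, Fin.le_def] at hlt ⊢; omega
      exact (ih (by omega) hin).trans (h n hj)
    · rfl

theorem IsLazyTrack.stepGraph_le (hf : IsLazyTrack G f) : stepGraph f ≤ G := by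
  rintro a b ⟨⟨i, hi, he⟩, hab⟩
  rcases Sym2.eq_iff.mp he with ⟨rfl, rfl⟩ | ⟨rfl, rfl⟩
  · exact (hf.2 i hi).resolve_right hab
  · exact ((hf.2 i hi).resolve_right (Ne.symm hab)).symm

theorem IsLazyTrack.reachable_stepGraph (hf : IsLazyTrack G f) (i j : Fin l) :
    (stepGraph f).Reachable (f i) (f j) := by
  refine reachable_of_forall_reachable_succ (fun n hn => ?_) i j
  rcases hf.2 n hn with hadj | heq
  · exact Adj.reachable ((fromEdgeSet_adj _).mpr ⟨⟨n, hn, rfl⟩, hadj.ne⟩)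
  · rw [heq]

theorem IsLazyTrack.sweepCond (hG : G.IsAcyclic) (hf : IsLazyTrack G f) : SweepCond G f := by
  rintro ⟨u, v⟩ huv
  obtain ⟨a, rfl⟩ := hf.1 u
  obtain ⟨b, rfl⟩ := hf.1 v
  exact ((fromEdgeSet_adj _).mp
    (hG.adj_of_le_of_reachable hf.stepGraph_le huv (hf.reachable_stepGraph a b))).1

theorem IsLazyTrack.isLazySweep (hG : G.IsAcyclic) (hf : IsLazyTrack G f) : IsLazySweep G f :=
  ⟨hf, hf.sweepCond hG⟩

theorem IsTrack.isLazyTrack (hf : IsTrack G f) : IsLazyTrack G f :=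
  ⟨hf.1, fun i hi => Or.inl (hf.2 i hi)⟩

theorem IsTrack.isSweep (hG : G.IsAcyclic) (hf : IsTrack G f) : IsSweep G f :=
  ⟨hf, hf.isLazyTrack.sweepCond hG⟩

end

theorem stmt4_general {V : Type*} (G : SimpleGraph V) (hG : G.IsTree) :
    strongVertexSpan G = strongEdgeSpan G ∧
      directVertexSpan G = directEdgeSpan G ∧
        cartesianVertexSpan G = cartesianEdgeSpan G := by
  have hac := hG.isAcyclic
  refine ⟨congrArg sSup ?_, congrArg sSup ?_, congrArg sSup ?_⟩ <;> ext d
  · exact ⟨fun ⟨l, f, g, hf, hg, hd⟩ => ⟨l, f, g, hf.isLazySweep hac, hg.isLazySweep hac, hd⟩,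
      fun ⟨l, f, g, hf, hg, hd⟩ => ⟨l, f, g, hf.1, hg.1, hd⟩⟩
  · exact ⟨fun ⟨l, f, g, hf, hg, hd⟩ => ⟨l, f, g, hf.isSweep hac, hg.isSweep hac, hd⟩,
      fun ⟨l, f, g, hf, hg, hd⟩ => ⟨l, f, g, hf.1, hg.1, hd⟩⟩
  · exact ⟨fun ⟨l, f, g, hf, hg, ho, hd⟩ =>
        ⟨l, f, g, hf.isLazySweep hac, hg.isLazySweep hac, ho, hd⟩,
      fun ⟨l, f, g, hf, hg, ho, hd⟩ => ⟨l, f, g, hf.1, hg.1, ho, hd⟩⟩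

theorem stmt4 {V : Type*} [Fintype V] (G : SimpleGraph V) (hG : G.IsTree) :
    strongVertexSpan G = strongEdgeSpan G ∧
      directVertexSpan G = directEdgeSpan G ∧
        cartesianVertexSpan G = cartesianEdgeSpan G :=
  stmt4_general G hG
end

section
/- For every n ≥ 3, the cycle C_n satisfies σ⊠_V(C_n)=σ⊠_E(C_n), σ×_V(C_n)=σ×_E(C_n), and σ□_V(C_n)=σ□_E(C_n). -/
open SimpleGraph

/-! Every sweep is a track, so each edge span is a supremum over a subfamily of the one defining
the corresponding vertex span; equality follows once every admissible pair of tracks on `C_n` can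
be prolonged to an admissible pair of sweeps without decreasing `m`. In the strong and direct
cases both walkers finish by going once around the cycle in the same direction: this moves the
pair by rotations, which are isometries. In the Cartesian case the walkers alternately step in a
common direction `ε`, the first one first; the pair then alternates, up to rotation, between its
final positions `(a, b)` and `(a + ε, b)`, and `ε` can be chosen so that `(a + ε, b)` is a rotation
of the pair one step earlier, since exactly one walker moved at that step. -/

open Function

theorem SimpleGraph.Reachable.dist_map_le {V W : Type*} {G : SimpleGraph V} {H : SimpleGraph W}
    (φ : G →g H) {u v : V} (h : G.Reachable u v) : H.dist (φ u) (φ v) ≤ G.dist u v := by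
  obtain ⟨p, hp⟩ := h.exists_walk_length_eq_dist
  exact (dist_le (p.map φ)).trans (by rw [Walk.length_map, hp])

theorem SimpleGraph.Iso.dist_eq {V W : Type*} {G : SimpleGraph V} {H : SimpleGraph W}
    (φ : G ≃g H) (u v : V) : H.dist (φ u) (φ v) = G.dist u v := by
  by_cases h : G.Reachable u v
  · refine le_antisymm (h.dist_map_le φ.toHom) ?_
    simpa using (h.map φ.toHom).dist_map_le φ.symm.toHom
  · have h' : ¬H.Reachable (φ u) (φ v) := fun h' => h (by simpa using h'.map φ.symm.toHom)
    rw [dist_eq_zero_of_not_reachable h, dist_eq_zero_of_not_reachable h']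

section Tracks

variable {V : Type*} {G : SimpleGraph V} {l : ℕ}

def IsStepwise (P : V → V → Prop) (f : Fin l → V) : Prop :=
  ∀ i (hi : i + 1 < l), P (f ⟨i, Nat.lt_of_succ_lt hi⟩) (f ⟨i + 1, hi⟩)

theorem mDist_le (f g : Fin l → V) (i : Fin l) : mDist G f g ≤ G.dist (f i) (g i) :=
  Nat.sInf_le ⟨i, rfl⟩

theorem le_mDist {f g : Fin l → V} {d : ℕ} (hl : 0 < l) (h : ∀ i, d ≤ G.dist (f i) (g i)) :
    d ≤ mDist G f g :=
  le_csInf ⟨_, ⟨0, hl⟩, rfl⟩ (by rintro _ ⟨i, rfl⟩; exact h i)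

/-- `f` continued by `S`, where `S 0` is placed at the last position `l - 1` of `f`. -/
def extendTrack (f : Fin l → V) (S : ℕ → V) (k : ℕ) : Fin (l + k) → V :=
  fun j => if h : j.val < l then f ⟨j, h⟩ else S (j - (l - 1))

variable {f g : Fin l → V} {S T : ℕ → V} {k : ℕ}

theorem extendTrack_of_lt {j : ℕ} (h : j < l) (hj : j < l + k) :
    extendTrack f S k ⟨j, hj⟩ = f ⟨j, h⟩ :=
  dif_pos h

theorem extendTrack_of_le (hl : 0 < l) (hS : S 0 = f ⟨l - 1, by omega⟩) {j : ℕ} (h : l - 1 ≤ j)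
    (hj : j < l + k) : extendTrack f S k ⟨j, hj⟩ = S (j - (l - 1)) := by
  by_cases hjl : j < l
  · obtain rfl : j = l - 1 := by omega
    rw [extendTrack_of_lt hjl, Nat.sub_self, hS]
  · exact dif_neg hjl

theorem extendTrack_prod (k : ℕ) :
    extendTrack (fun i => (f i, g i)) (fun t => (S t, T t)) k =
      fun j => (extendTrack f S k j, extendTrack g T k j) := by
  funext j
  unfold extendTrack
  split_ifs <;> rfl

theorem Function.Surjective.extendTrack (hf : Surjective f) : Surjective (extendTrack f S k) := by
  intro v
  obtain ⟨i, rfl⟩ := hf v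
  exact ⟨⟨i, by omega⟩, extendTrack_of_lt i.isLt _⟩

theorem IsStepwise.extendTrack {P : V → V → Prop} (hf : IsStepwise P f) (hl : 0 < l)
    (hS : S 0 = f ⟨l - 1, by omega⟩) (hSP : ∀ t < k, P (S t) (S (t + 1))) :
    IsStepwise P (extendTrack f S k) := by
  intro i hi
  by_cases h : i + 1 < l
  · rw [extendTrack_of_lt (by omega), extendTrack_of_lt h]
    exact hf i h
  · rw [extendTrack_of_le hl hS (by omega), extendTrack_of_le hl hS (by omega),
      show i + 1 - (l - 1) = i - (l - 1) + 1 by omega]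
    exact hSP _ (by omega)

theorem sweepCond_extendTrack (hl : 0 < l) (hS : S 0 = f ⟨l - 1, by omega⟩)
    (hcover : ∀ e ∈ G.edgeSet, ∃ t < k, e = s(S t, S (t + 1))) :
    SweepCond G (extendTrack f S k) := by
  intro e he
  obtain ⟨t, ht, rfl⟩ := hcover e he
  refine ⟨l - 1 + t, by omega, ?_⟩
  rw [extendTrack_of_le hl hS (by omega), extendTrack_of_le hl hS (by omega),
    show l - 1 + t - (l - 1) = t by omega, show l - 1 + t + 1 - (l - 1) = t + 1 by omega]

theorem mDist_le_mDist_extendTrack (hl : 0 < l) (hS : S 0 = f ⟨l - 1, by omega⟩)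
    (hT : T 0 = g ⟨l - 1, by omega⟩) (hST : ∀ t, mDist G f g ≤ G.dist (S t) (T t)) :
    mDist G f g ≤ mDist G (extendTrack f S k) (extendTrack g T k) := by
  refine le_mDist (by omega) fun ⟨j, hj⟩ => ?_
  by_cases h : j < l
  · rw [extendTrack_of_lt h, extendTrack_of_lt h]
    exact mDist_le f g _
  · rw [extendTrack_of_le hl hS (by omega), extendTrack_of_le hl hT (by omega)]
    exact hST _

def OppositeStep (G : SimpleGraph V) (p q : V × V) : Prop :=
  (G.Adj p.1 q.1 ∨ p.1 = q.1) ∧ (G.Adj p.2 q.2 ∨ p.2 = q.2) ∧ (G.Adj p.1 q.1 ↔ p.2 = q.2)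

theorem isLazyTrack_and_isOpposite_iff :
    IsLazyTrack G f ∧ IsLazyTrack G g ∧ IsOpposite G f g ↔
      Surjective f ∧ Surjective g ∧ IsStepwise (OppositeStep G) fun i => (f i, g i) :=
  ⟨fun ⟨hf, hg, hop⟩ => ⟨hf.1, hg.1, fun i hi => ⟨hf.2 i hi, hg.2 i hi, hop i hi⟩⟩,
    fun ⟨hf, hg, h⟩ => ⟨⟨hf, fun i hi => (h i hi).1⟩, ⟨hg, fun i hi => (h i hi).2.1⟩,
      fun i hi => (h i hi).2.2⟩⟩

theorem IsOpposite.adj_and_eq_or_eq_and_adj (hf : IsLazyTrack G f) (hg : IsLazyTrack G g)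
    (hop : IsOpposite G f g) (i : ℕ) (hi : i + 1 < l) :
    (G.Adj (f ⟨i, by omega⟩) (f ⟨i + 1, hi⟩) ∧ g ⟨i, by omega⟩ = g ⟨i + 1, hi⟩) ∨
      (f ⟨i, by omega⟩ = f ⟨i + 1, hi⟩ ∧ G.Adj (g ⟨i, by omega⟩) (g ⟨i + 1, hi⟩)) := by
  by_cases h : G.Adj (f ⟨i, by omega⟩) (f ⟨i + 1, hi⟩)
  · exact Or.inl ⟨h, (hop i hi).mp h⟩
  · exact Or.inr ⟨(hf.2 i hi).resolve_left h, (hg.2 i hi).resolve_right (mt (hop i hi).mpr h)⟩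

theorem oppositeStep_alternate {x y : ℕ → V} (hx : ∀ s, G.Adj (x s) (x (s + 1)))
    (hy : ∀ s, G.Adj (y s) (y (s + 1))) (t : ℕ) :
    OppositeStep G (x ((t + 1) / 2), y (t / 2)) (x ((t + 1 + 1) / 2), y ((t + 1) / 2)) := by
  obtain ⟨s, rfl | rfl⟩ := Nat.even_or_odd' t
  · simp only [show (2 * s + 1) / 2 = s by omega, show (2 * s + 1 + 1) / 2 = s + 1 by omega,
      show 2 * s / 2 = s by omega]
    exact ⟨Or.inl (hx s), Or.inr rfl, iff_of_true (hx s) rfl⟩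
  · simp only [show (2 * s + 1 + 1) / 2 = s + 1 by omega,
      show (2 * s + 1 + 1 + 1) / 2 = s + 1 by omega, show (2 * s + 1) / 2 = s by omega]
    exact ⟨Or.inr rfl, Or.inl (hy s), iff_of_false G.irrefl (hy s).ne⟩

end Tracks
section Spans

variable {V : Type*} {G : SimpleGraph V}

theorem strongVertexSpan_eq_strongEdgeSpan
    (h : ∀ (l : ℕ) (f g : Fin l → V), IsLazyTrack G f → IsLazyTrack G g →
      ∃ (k : ℕ) (F F' : Fin k → V),
        IsLazySweep G F ∧ IsLazySweep G F' ∧ mDist G f g ≤ mDist G F F') :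
    strongVertexSpan G = strongEdgeSpan G := by
  refine csSup_eq_csSup_of_forall_exists_le ?_ ?_
  · rintro _ ⟨l, f, g, hf, hg, rfl⟩
    obtain ⟨k, F, F', hF, hF', hle⟩ := h l f g hf hg
    exact ⟨_, ⟨k, F, F', hF, hF', rfl⟩, hle⟩
  · rintro _ ⟨l, f, g, hf, hg, rfl⟩
    exact ⟨_, ⟨l, f, g, hf.1, hg.1, rfl⟩, le_rfl⟩

theorem directVertexSpan_eq_directEdgeSpan
    (h : ∀ (l : ℕ) (f g : Fin l → V), IsTrack G f → IsTrack G g →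
      ∃ (k : ℕ) (F F' : Fin k → V), IsSweep G F ∧ IsSweep G F' ∧ mDist G f g ≤ mDist G F F') :
    directVertexSpan G = directEdgeSpan G := by
  refine csSup_eq_csSup_of_forall_exists_le ?_ ?_
  · rintro _ ⟨l, f, g, hf, hg, rfl⟩
    obtain ⟨k, F, F', hF, hF', hle⟩ := h l f g hf hg
    exact ⟨_, ⟨k, F, F', hF, hF', rfl⟩, hle⟩
  · rintro _ ⟨l, f, g, hf, hg, rfl⟩
    exact ⟨_, ⟨l, f, g, hf.1, hg.1, rfl⟩, le_rfl⟩

theorem cartesianVertexSpan_eq_cartesianEdgeSpan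
    (h : ∀ (l : ℕ) (f g : Fin l → V), IsLazyTrack G f → IsLazyTrack G g → IsOpposite G f g →
      ∃ (k : ℕ) (F F' : Fin k → V), IsLazySweep G F ∧ IsLazySweep G F' ∧ IsOpposite G F F' ∧
        mDist G f g ≤ mDist G F F') :
    cartesianVertexSpan G = cartesianEdgeSpan G := by
  refine csSup_eq_csSup_of_forall_exists_le ?_ ?_
  · rintro _ ⟨l, f, g, hf, hg, hop, rfl⟩
    obtain ⟨k, F, F', hF, hF', hop', hle⟩ := h l f g hf hg hop
    exact ⟨_, ⟨k, F, F', hF, hF', hop', rfl⟩, hle⟩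
  · rintro _ ⟨l, f, g, hf, hg, hop, rfl⟩
    exact ⟨_, ⟨l, f, g, hf.1, hg.1, hop, rfl⟩, le_rfl⟩

end Spans

section CycleGraph

variable {n l : ℕ}

theorem cycleGraph_adj_iff_exists_add {u v : Fin (n + 2)} :
    (cycleGraph (n + 2)).Adj u v ↔ ∃ ε, (ε = 1 ∨ ε = -1) ∧ v = u + ε := by
  rw [cycleGraph_adj]
  constructor
  · rintro (h | h)
    · exact ⟨-1, Or.inr rfl, by rw [← h]; abel⟩
    · exact ⟨1, Or.inl rfl, by rw [← h]; abel⟩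
  · rintro ⟨ε, rfl | rfl, rfl⟩
    · right; abel
    · left; abel

theorem cycleGraph_adj_add {ε : Fin (n + 2)} (hε : ε = 1 ∨ ε = -1) (u : Fin (n + 2)) :
    (cycleGraph (n + 2)).Adj u (u + ε) :=
  cycleGraph_adj_iff_exists_add.mpr ⟨ε, hε, rfl⟩

theorem cycleGraph_adj_add_nsmul {ε : Fin (n + 2)} (hε : ε = 1 ∨ ε = -1) (a : Fin (n + 2))
    (t : ℕ) : (cycleGraph (n + 2)).Adj (a + t • ε) (a + (t + 1) • ε) := by
  rw [succ_nsmul, ← add_assoc]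
  exact cycleGraph_adj_add hε _

def cycleGraphAddRight (t : Fin (n + 2)) : cycleGraph (n + 2) ≃g cycleGraph (n + 2) where
  toEquiv := Equiv.addRight t
  map_rel_iff' := by simp [cycleGraph_adj]

theorem cycleGraph_dist_add_right (u v t : Fin (n + 2)) :
    (cycleGraph (n + 2)).dist (u + t) (v + t) = (cycleGraph (n + 2)).dist u v :=
  (cycleGraphAddRight t).dist_eq u v

theorem cycleGraph_exists_edge_eq {ε : Fin (n + 2)} (hε : ε = 1 ∨ ε = -1)
    {e : Sym2 (Fin (n + 2))} (he : e ∈ (cycleGraph (n + 2)).edgeSet) : ∃ x, e = s(x, x + ε) := by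
  induction e with
  | h u v =>
    obtain ⟨δ, hδ, rfl⟩ := cycleGraph_adj_iff_exists_add.mp ((mem_edgeSet _).mp he)
    rcases hε with rfl | rfl <;> rcases hδ with rfl | rfl
    · exact ⟨u, rfl⟩
    · exact ⟨u + -1, by rw [Sym2.eq_swap]; congr 1; abel⟩
    · exact ⟨u + 1, by rw [Sym2.eq_swap]; congr 1; abel⟩
    · exact ⟨u, rfl⟩

open Fin.NatCast in
theorem Fin.exists_eq_add_nsmul {ε : Fin (n + 2)} (hε : ε = 1 ∨ ε = -1) (a y : Fin (n + 2)) :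
    ∃ t < n + 2, y = a + t • ε := by
  rcases hε with rfl | rfl
  · refine ⟨(y - a).val, (y - a).isLt, ?_⟩
    rw [nsmul_one, Fin.cast_val_eq_self]; abel
  · refine ⟨(a - y).val, (a - y).isLt, ?_⟩
    rw [smul_neg, nsmul_one, Fin.cast_val_eq_self]; abel

theorem cycleGraph_exists_edge_eq_add_nsmul {ε : Fin (n + 2)} (hε : ε = 1 ∨ ε = -1)
    (a : Fin (n + 2)) {e : Sym2 (Fin (n + 2))} (he : e ∈ (cycleGraph (n + 2)).edgeSet) :
    ∃ t < n + 2, e = s(a + t • ε, a + (t + 1) • ε) := by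
  obtain ⟨x, rfl⟩ := cycleGraph_exists_edge_eq hε he
  obtain ⟨t, ht, rfl⟩ := Fin.exists_eq_add_nsmul hε a x
  exact ⟨t, ht, by rw [succ_nsmul, add_assoc]⟩

theorem cycleGraph_exists_dist_add_eq {u v a b : Fin (n + 2)}
    (h : ((cycleGraph (n + 2)).Adj u a ∧ v = b) ∨ (u = a ∧ (cycleGraph (n + 2)).Adj v b)) :
    ∃ ε, (ε = 1 ∨ ε = -1) ∧
      (cycleGraph (n + 2)).dist (a + ε) b = (cycleGraph (n + 2)).dist u v := by
  rcases h with ⟨hua, rfl⟩ | ⟨rfl, hvb⟩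
  · obtain ⟨ε, hε, rfl⟩ := cycleGraph_adj_iff_exists_add.mp hua.symm
    exact ⟨ε, hε, rfl⟩
  · obtain ⟨ε, hε, rfl⟩ := cycleGraph_adj_iff_exists_add.mp hvb
    exact ⟨ε, hε, cycleGraph_dist_add_right _ _ _⟩

theorem cycleGraph_exists_sweep_extension {P : Fin (n + 2) → Fin (n + 2) → Prop}
    (hP : ∀ x y, (cycleGraph (n + 2)).Adj x y → P x y) {f g : Fin l → Fin (n + 2)}
    (hf : Surjective f ∧ IsStepwise P f) (hg : Surjective g ∧ IsStepwise P g) :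
    ∃ (k : ℕ) (F F' : Fin k → Fin (n + 2)),
      ((Surjective F ∧ IsStepwise P F) ∧ SweepCond (cycleGraph (n + 2)) F) ∧
      ((Surjective F' ∧ IsStepwise P F') ∧ SweepCond (cycleGraph (n + 2)) F') ∧
      mDist (cycleGraph (n + 2)) f g ≤ mDist (cycleGraph (n + 2)) F F' := by
  obtain ⟨i, -⟩ := hf.1 0
  have hl : 0 < l := i.pos
  let around (h : Fin l → Fin (n + 2)) :=
    extendTrack h (fun t => h ⟨l - 1, by omega⟩ + t • 1) (n + 2)
  have hsweep (h : Fin l → Fin (n + 2)) (hh : Surjective h ∧ IsStepwise P h) :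
      (Surjective (around h) ∧ IsStepwise P (around h)) ∧
        SweepCond (cycleGraph (n + 2)) (around h) :=
    ⟨⟨hh.1.extendTrack, hh.2.extendTrack hl (by simp) fun t _ =>
        hP _ _ (cycleGraph_adj_add_nsmul (Or.inl rfl) _ t)⟩,
      sweepCond_extendTrack hl (by simp) fun _ =>
        cycleGraph_exists_edge_eq_add_nsmul (Or.inl rfl) _⟩
  refine ⟨_, around f, around g, hsweep f hf, hsweep g hg,
    mDist_le_mDist_extendTrack hl (by simp) (by simp) fun t => ?_⟩
  rw [cycleGraph_dist_add_right]
  exact mDist_le f g _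

theorem cycleGraph_exists_opposite_sweep_extension {f g : Fin l → Fin (n + 2)}
    (hf : IsLazyTrack (cycleGraph (n + 2)) f) (hg : IsLazyTrack (cycleGraph (n + 2)) g)
    (hop : IsOpposite (cycleGraph (n + 2)) f g) :
    ∃ (k : ℕ) (F F' : Fin k → Fin (n + 2)),
      IsLazySweep (cycleGraph (n + 2)) F ∧ IsLazySweep (cycleGraph (n + 2)) F' ∧
      IsOpposite (cycleGraph (n + 2)) F F' ∧
      mDist (cycleGraph (n + 2)) f g ≤ mDist (cycleGraph (n + 2)) F F' := by
  have hl : 1 < l := by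
    have hcard := Fintype.card_le_of_surjective f hf.1
    rw [Fintype.card_fin, Fintype.card_fin] at hcard
    omega
  set a := f ⟨l - 1, by omega⟩
  set b := g ⟨l - 1, by omega⟩
  have hlast := hop.adj_and_eq_or_eq_and_adj hf hg (l - 2) (by omega)
  simp only [show l - 2 + 1 = l - 1 by omega] at hlast
  obtain ⟨ε, hε, hdist⟩ := cycleGraph_exists_dist_add_eq hlast
  set S : ℕ → Fin (n + 2) := fun t => a + ((t + 1) / 2) • ε
  set T : ℕ → Fin (n + 2) := fun t => b + (t / 2) • ε
  have hS : S 0 = a := by simp [S]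
  have hT : T 0 = b := by simp [T]
  obtain ⟨hFs, hGs, hFG⟩ := isLazyTrack_and_isOpposite_iff.mp ⟨hf, hg, hop⟩
  have hsteps : IsStepwise (OppositeStep (cycleGraph (n + 2))) fun j =>
      (extendTrack f S (2 * (n + 2)) j, extendTrack g T (2 * (n + 2)) j) := by
    rw [← extendTrack_prod]
    exact hFG.extendTrack (by omega) (by simp [hS, hT, a, b]) fun t _ =>
      oppositeStep_alternate (cycleGraph_adj_add_nsmul hε a) (cycleGraph_adj_add_nsmul hε b) t
  obtain ⟨hF, hG, hFG'⟩ :=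
    isLazyTrack_and_isOpposite_iff.mpr ⟨hFs.extendTrack, hGs.extendTrack, hsteps⟩
  refine ⟨_, _, _, ⟨hF, sweepCond_extendTrack (by omega) hS fun e he => ?_⟩,
    ⟨hG, sweepCond_extendTrack (by omega) hT fun e he => ?_⟩, hFG',
    mDist_le_mDist_extendTrack (by omega) hS hT fun t => ?_⟩
  · obtain ⟨s, hs, rfl⟩ := cycleGraph_exists_edge_eq_add_nsmul hε a he
    refine ⟨2 * s, by omega, ?_⟩
    simp only [S, show (2 * s + 1) / 2 = s by omega, show (2 * s + 1 + 1) / 2 = s + 1 by omega]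
  · obtain ⟨s, hs, rfl⟩ := cycleGraph_exists_edge_eq_add_nsmul hε b he
    refine ⟨2 * s + 1, by omega, ?_⟩
    simp only [T, show (2 * s + 1) / 2 = s by omega, show (2 * s + 1 + 1) / 2 = s + 1 by omega]
  · obtain ⟨s, rfl | rfl⟩ := Nat.even_or_odd' t
    · simp only [S, T, show (2 * s + 1) / 2 = s by omega, show 2 * s / 2 = s by omega,
        cycleGraph_dist_add_right]
      exact mDist_le f g _
    · simp only [S, T, show (2 * s + 1 + 1) / 2 = s + 1 by omega,
        show (2 * s + 1) / 2 = s by omega]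
      rw [succ_nsmul, add_comm _ ε, ← add_assoc, cycleGraph_dist_add_right, hdist]
      exact mDist_le f g _

end CycleGraph

theorem stmt5 (n : ℕ) (hn : 3 ≤ n) :
    strongVertexSpan (SimpleGraph.cycleGraph n) = strongEdgeSpan (SimpleGraph.cycleGraph n) ∧
      directVertexSpan (SimpleGraph.cycleGraph n) = directEdgeSpan (SimpleGraph.cycleGraph n) ∧
        cartesianVertexSpan (SimpleGraph.cycleGraph n) =
          cartesianEdgeSpan (SimpleGraph.cycleGraph n) := by
  obtain ⟨n, rfl⟩ : ∃ m, n = m + 2 := ⟨n - 2, by omega⟩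
  refine ⟨strongVertexSpan_eq_strongEdgeSpan fun _ _ _ hf hg => ?_,
    directVertexSpan_eq_directEdgeSpan fun _ _ _ hf hg => ?_,
    cartesianVertexSpan_eq_cartesianEdgeSpan fun _ _ _ =>
      cycleGraph_exists_opposite_sweep_extension⟩
  · exact cycleGraph_exists_sweep_extension
      (P := fun x y => (cycleGraph (n + 2)).Adj x y ∨ x = y) (fun _ _ => Or.inl) hf hg
  · exact cycleGraph_exists_sweep_extension (fun _ _ => id) hf hg
end

section
/- For every n ≥ 4, the graph K_n^+ satisfies σ⊠_V(K_n^+) = σ⊠_E(K_n^+) = 2. -/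
open SimpleGraph

/-- `K_n^+`: the complete graph `K_n` (on `Fin n`, with `v_1 = 0` and `v_n = n-1`)
with the edge `v_1 v_n` subdivided through the new vertex `w = Sum.inr ()`. -/
def KnPlus (n : ℕ) : SimpleGraph (Fin n ⊕ Unit) :=
  SimpleGraph.fromRel (fun a b =>
    match a, b with
    | Sum.inl i, Sum.inl j =>
        ¬((i.val = 0 ∧ j.val = n - 1) ∨ (i.val = n - 1 ∧ j.val = 0))
    | Sum.inl i, Sum.inr _ => i.val = 0 ∨ i.val = n - 1
    | Sum.inr _, _ => False)

/-!
The diameter of `K_n^+` is `2`, which bounds every span by `2`. For the lower bound, fix an inner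
vertex `c` and let `φ` swap `v_1` and `v_n`, send the other vertices of `K_n` to `w`, and `w` to
`c`. Every vertex is at distance `2` from its image, and `φ` maps each edge to an edge or to a
single vertex. So if `W` is a walk from `v_1` to `w` through every edge, then `W` followed by
`φ ∘ W` and `φ ∘ W` followed by `W` are lazy sweeps (the junctions `w v_n` and `c v_1` are edges)
that stay at distance `2` from each other at all times.
-/

namespace SimpleGraph

variable {V : Type*} {G : SimpleGraph V}

def LazyAdj (G : SimpleGraph V) (a b : V) : Prop := G.Adj a b ∨ a = b

theorem LazyAdj.map {W : Type*} {H : SimpleGraph W} {φ : V → W}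
    (hφ : ∀ a b, G.Adj a b → H.LazyAdj (φ a) (φ b)) {a b : V} (h : G.LazyAdj a b) :
    H.LazyAdj (φ a) (φ b) := by
  rcases h with h | rfl
  · exact hφ a b h
  · exact Or.inr rfl

theorem Walk.lazyAdj_getVert_succ {u v : V} (p : G.Walk u v) (i : ℕ) :
    G.LazyAdj (p.getVert i) (p.getVert (i + 1)) := by
  rcases lt_or_ge i p.length with hi | hi
  · exact Or.inl (p.adj_getVert_succ hi)
  · exact Or.inr (by rw [p.getVert_of_length_le hi, p.getVert_of_length_le (by omega)])

theorem Walk.exists_getVert_of_mem_edges {u v : V} (p : G.Walk u v) {e : Sym2 V}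
    (he : e ∈ p.edges) : ∃ i < p.length, e = s(p.getVert i, p.getVert (i + 1)) := by
  induction e using Sym2.ind with
  | _ a b =>
    obtain ⟨i, hi, he⟩ := (p.mk_mem_edges_iff_exists).mp he
    exact ⟨i, hi, he.symm⟩

theorem dist_eq_two_of_adj_of_adj {a b c : V} (hne : a ≠ b) (hnadj : ¬ G.Adj a b)
    (hac : G.Adj a c) (hcb : G.Adj c b) : G.dist a b = 2 := by
  rw [dist, edist_eq_two_iff.mpr ⟨hne, hnadj, c, hac, hcb.symm⟩]
  rfl

theorem Preconnected.exists_walk_covering [Finite V] [Nontrivial V] (hG : G.Preconnected)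
    (u v : V) : ∃ p : G.Walk u v, (∀ x, x ∈ p.support) ∧ ∀ e ∈ G.edgeSet, e ∈ p.edges := by
  have hcover : ∀ es : List (Sym2 V), (∀ e ∈ es, e ∈ G.edgeSet) →
      ∀ u, ∃ p : G.Walk u v, ∀ e ∈ es, e ∈ p.edges := by
    intro es
    induction es with
    | nil => exact fun _ u => ⟨(hG u v).some, by simp⟩
    | cons e es ih =>
      intro hes u
      induction e using Sym2.ind with
      | _ a b =>
        have hab : G.Adj a b := hes _ List.mem_cons_self
        obtain ⟨q, hq⟩ := ih (fun e he => hes e (List.mem_cons_of_mem _ he)) b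
        refine ⟨((hG u a).some.concat hab).append q, ?_⟩
        simp only [List.mem_cons, Walk.edges_append, Walk.edges_concat, List.concat_eq_append,
          List.mem_append, forall_eq_or_imp, true_or, or_true, true_and]
        exact fun e he => Or.inr (hq e he)
  obtain ⟨p, hp⟩ := hcover (Set.toFinite G.edgeSet).toFinset.toList (by simp) u
  have hedges : ∀ e ∈ G.edgeSet, e ∈ p.edges := fun e he => hp e (by simpa using he)
  refine ⟨p, fun x => ?_, hedges⟩
  obtain ⟨y, hxy⟩ := hG.exists_adj_of_nontrivial x
  exact p.fst_mem_support_of_mem_edges (hedges _ hxy)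

end SimpleGraph

open SimpleGraph

section Spans

variable {V : Type*} {G : SimpleGraph V}

theorem mDist_le_of_forall_dist_le {k l : ℕ} (h : ∀ a b, G.dist a b ≤ k) (f g : Fin l → V) :
    mDist G f g ≤ k := by
  rcases isEmpty_or_nonempty (Fin l) with hl | ⟨⟨i⟩⟩
  · simp [mDist]
  · exact (Nat.sInf_le ⟨i, rfl⟩ : mDist G f g ≤ G.dist (f i) (g i)).trans (h _ _)

theorem mDist_eq_of_forall_dist_eq {k l : ℕ} [NeZero l] {f g : Fin l → V}
    (h : ∀ i, G.dist (f i) (g i) = k) : mDist G f g = k := by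
  refine le_antisymm (Nat.sInf_le ⟨0, h 0⟩) (le_csInf ⟨k, 0, h 0⟩ ?_)
  rintro _ ⟨i, rfl⟩
  exact (h i).ge

theorem strongSpans_eq_of_forall_dist_le {k : ℕ} (hdist : ∀ a b, G.dist a b ≤ k)
    (hk : ∃ (l : ℕ) (f g : Fin l → V), IsLazySweep G f ∧ IsLazySweep G g ∧ mDist G f g = k) :
    strongVertexSpan G = k ∧ strongEdgeSpan G = k := by
  obtain ⟨l, f, g, hf, hg, hfg⟩ := hk
  constructor
  · refine IsGreatest.csSup_eq ⟨⟨l, f, g, hf.1, hg.1, hfg⟩, ?_⟩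
    rintro _ ⟨l, f, g, -, -, rfl⟩
    exact mDist_le_of_forall_dist_le hdist f g
  · refine IsGreatest.csSup_eq ⟨⟨l, f, g, hf, hg, hfg⟩, ?_⟩
    rintro _ ⟨l, f, g, -, -, rfl⟩
    exact mDist_le_of_forall_dist_le hdist f g

def seqAppend (m : ℕ) (a b : ℕ → V) : ℕ → V := fun i => if i ≤ m then a i else b (i - (m + 1))

theorem seqAppend_of_le {m i : ℕ} {a b : ℕ → V} (h : i ≤ m) : seqAppend m a b i = a i :=
  if_pos h

theorem seqAppend_add {m i : ℕ} {a b : ℕ → V} : seqAppend m a b (m + 1 + i) = b i := by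
  simp only [seqAppend, if_neg (show ¬m + 1 + i ≤ m by omega), Nat.add_sub_cancel_left]

theorem lazyAdj_seqAppend {m : ℕ} {a b : ℕ → V} (ha : ∀ i, G.LazyAdj (a i) (a (i + 1)))
    (hab : G.LazyAdj (a m) (b 0)) (hb : ∀ i, G.LazyAdj (b i) (b (i + 1))) (i : ℕ) :
    G.LazyAdj (seqAppend m a b i) (seqAppend m a b (i + 1)) := by
  rcases lt_trichotomy i m with hi | rfl | hi
  · rw [seqAppend_of_le hi.le, seqAppend_of_le hi]
    exact ha i
  · rw [seqAppend_of_le le_rfl, ← add_zero (i + 1), seqAppend_add]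
    exact hab
  · obtain ⟨j, rfl⟩ : ∃ j, i = m + 1 + j := ⟨i - (m + 1), by omega⟩
    rw [seqAppend_add, add_assoc, seqAppend_add]
    exact hb j

theorem isLazySweep_of_walk_segment {s : ℕ → V} (hs : ∀ i, G.LazyAdj (s i) (s (i + 1)))
    {u v : V} (p : G.Walk u v) (hsupp : ∀ x, x ∈ p.support)
    (hedges : ∀ e ∈ G.edgeSet, e ∈ p.edges) {k l : ℕ} (hkl : k + p.length < l)
    (hps : ∀ i ≤ p.length, s (k + i) = p.getVert i) : IsLazySweep G (fun i : Fin l => s i) := by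
  refine ⟨⟨fun x => ?_, fun i _ => hs i⟩, fun e he => ?_⟩
  · obtain ⟨i, rfl, hi⟩ := Walk.mem_support_iff_exists_getVert.mp (hsupp x)
    exact ⟨⟨k + i, by omega⟩, hps i hi⟩
  · obtain ⟨i, hi, rfl⟩ := p.exists_getVert_of_mem_edges (hedges e he)
    refine ⟨k + i, by omega, ?_⟩
    simp only [add_assoc, hps i hi.le, hps (i + 1) hi]

/-- Run `p` and then `φ ∘ p` against `φ ∘ p` and then `p`: both runs contain `p`, hence are
sweeps, and at every time the two positions are `x` and `φ x` for some vertex `x`. -/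
theorem exists_lazySweeps_mDist_eq {k : ℕ} (φ : V → V)
    (hφ : ∀ a b, G.Adj a b → G.LazyAdj (φ a) (φ b)) (hdist : ∀ x, G.dist x (φ x) = k)
    {u v : V} (p : G.Walk u v) (hsupp : ∀ x, x ∈ p.support)
    (hedges : ∀ e ∈ G.edgeSet, e ∈ p.edges) (hvu : G.LazyAdj v (φ u))
    (huv : G.LazyAdj (φ v) u) :
    ∃ (l : ℕ) (f g : Fin l → V), IsLazySweep G f ∧ IsLazySweep G g ∧ mDist G f g = k := by
  have hp : ∀ i, G.LazyAdj (p.getVert i) (p.getVert (i + 1)) := p.lazyAdj_getVert_succ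
  have hφp : ∀ i, G.LazyAdj (φ (p.getVert i)) (φ (p.getVert (i + 1))) :=
    fun i => (hp i).map hφ
  refine ⟨2 * p.length + 2, fun i => seqAppend p.length p.getVert (φ ∘ p.getVert) i,
    fun i => seqAppend p.length (φ ∘ p.getVert) p.getVert i, ?_, ?_, ?_⟩
  · refine isLazySweep_of_walk_segment (lazyAdj_seqAppend hp ?_ hφp) p hsupp hedges
      (k := 0) (l := 2 * p.length + 2) (by omega) fun i hi => by rw [zero_add, seqAppend_of_le hi]
    rwa [p.getVert_length, p.getVert_zero]
  · refine isLazySweep_of_walk_segment (lazyAdj_seqAppend hφp ?_ hp) p hsupp hedges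
      (k := p.length + 1) (l := 2 * p.length + 2) (by omega) fun i _ => seqAppend_add
    rwa [p.getVert_length, p.getVert_zero]
  · refine mDist_eq_of_forall_dist_eq fun i => ?_
    by_cases hi : i.val ≤ p.length
    · simp only [seqAppend_of_le hi, Function.comp_apply, hdist]
    · obtain ⟨j, hj⟩ : ∃ j, i.val = p.length + 1 + j := ⟨i - (p.length + 1), by omega⟩
      simp only [hj, seqAppend_add, Function.comp_apply]
      rw [SimpleGraph.dist_comm, hdist]

end Spans

namespace KnPlus

variable {n : ℕ}

@[simp]
theorem adj_inl_inl {i j : Fin n} : (KnPlus n).Adj (.inl i) (.inl j) ↔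
    i.val ≠ j.val ∧ ¬((i.val = 0 ∧ j.val = n - 1) ∨ (i.val = n - 1 ∧ j.val = 0)) := by
  simp only [KnPlus, fromRel_adj, ne_eq, Sum.inl.injEq, ← Fin.val_ne_iff]
  tauto

@[simp]
theorem adj_inl_inr {i : Fin n} {u : Unit} :
    (KnPlus n).Adj (.inl i) (.inr u) ↔ i.val = 0 ∨ i.val = n - 1 := by
  simp [KnPlus]

@[simp]
theorem adj_inr_inl {i : Fin n} {u : Unit} :
    (KnPlus n).Adj (.inr u) (.inl i) ↔ i.val = 0 ∨ i.val = n - 1 := by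
  rw [adj_comm, adj_inl_inr]

@[simp]
theorem not_adj_inr_inr {u u' : Unit} : ¬(KnPlus n).Adj (.inr u) (.inr u') := by
  simp [KnPlus]

theorem edist_le_two (a b : Fin n ⊕ Unit) : (KnPlus n).edist a b ≤ 2 := by
  have hpath {a b : Fin n ⊕ Unit} (c : Fin n ⊕ Unit) (hac : (KnPlus n).Adj a c)
      (hcb : (KnPlus n).Adj c b) : (KnPlus n).edist a b ≤ 2 :=
    (Walk.cons hac (Walk.cons hcb .nil)).edist_le
  have hnear {a b : Fin n ⊕ Unit} (h : (KnPlus n).Adj a b ∨ a = b) :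
      (KnPlus n).edist a b ≤ 2 :=
    (edist_le_one_iff_adj_or_eq.mpr h).trans (by norm_num)
  have hinr (i : Fin n) (u : Unit) : (KnPlus n).edist (.inl i) (.inr u) ≤ 2 := by
    by_cases hend : i.val = 0 ∨ i.val = n - 1
    · exact hnear (Or.inl (adj_inl_inr.mpr hend))
    · exact hpath (.inl ⟨0, by omega⟩) (by simp only [adj_inl_inl]; omega)
        (adj_inl_inr.mpr (Or.inl rfl))
  rcases a with i | u <;> rcases b with j | u'
  · by_cases hend : (i.val = 0 ∧ j.val = n - 1) ∨ (i.val = n - 1 ∧ j.val = 0)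
    · exact hpath (.inr ()) (by rw [adj_inl_inr]; omega) (by rw [adj_inr_inl]; omega)
    · by_cases hij : i = j
      · exact hnear (Or.inr (by rw [hij]))
      · exact hnear (Or.inl (adj_inl_inl.mpr ⟨Fin.val_ne_of_ne hij, hend⟩))
  · exact hinr i u'
  · rw [SimpleGraph.edist_comm]
    exact hinr j u
  · exact hnear (Or.inr rfl)

theorem preconnected : (KnPlus n).Preconnected := fun a b =>
  reachable_of_edist_ne_top ((edist_le_two a b).trans_lt (by decide)).ne

theorem dist_le_two (a b : Fin n ⊕ Unit) : (KnPlus n).dist a b ≤ 2 :=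
  ENat.toNat_le_of_le_natCast (edist_le_two a b)

def antipode (c : Fin n) : Fin n ⊕ Unit → Fin n ⊕ Unit
  | .inl i => if i.val = 0 ∨ i.val = n - 1 then .inl i.rev else .inr ()
  | .inr _ => .inl c

theorem lazyAdj_antipode {c : Fin n} (hc₀ : c.val ≠ 0) (hc₁ : c.val ≠ n - 1)
    (a b : Fin n ⊕ Unit) (h : (KnPlus n).Adj a b) :
    (KnPlus n).LazyAdj (antipode c a) (antipode c b) := by
  rcases a with i | _ <;> rcases b with j | _ <;>
    simp only [antipode, LazyAdj, adj_inl_inl, adj_inl_inr, adj_inr_inl, not_adj_inr_inr]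
      at h ⊢ <;>
    split_ifs <;>
    simp only [adj_inl_inl, adj_inl_inr, adj_inr_inl, Sum.inl.injEq, Fin.ext_iff, Fin.val_rev,
      not_adj_inr_inr, or_false, or_true] <;>
    omega

theorem dist_antipode {c : Fin n} (hc₀ : c.val ≠ 0) (hc₁ : c.val ≠ n - 1) (x : Fin n ⊕ Unit) :
    (KnPlus n).dist x (antipode c x) = 2 := by
  rcases x with i | _
  · by_cases hend : i.val = 0 ∨ i.val = n - 1
    · rw [antipode, if_pos hend]
      exact dist_eq_two_of_adj_of_adj (c := .inr ())
        (by simp only [ne_eq, Sum.inl.injEq, Fin.ext_iff, Fin.val_rev]; omega)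
        (by rw [adj_inl_inl, Fin.val_rev]; omega) (adj_inl_inr.mpr hend)
        (by rw [adj_inr_inl, Fin.val_rev]; omega)
    · rw [antipode, if_neg hend]
      exact dist_eq_two_of_adj_of_adj (c := .inl ⟨0, by omega⟩) Sum.inl_ne_inr
        (by rwa [adj_inl_inr]) (by simp only [adj_inl_inl]; omega)
        (adj_inl_inr.mpr (Or.inl rfl))
  · rw [antipode]
    exact dist_eq_two_of_adj_of_adj (c := .inl ⟨0, by omega⟩) Sum.inr_ne_inl
      (by rw [adj_inr_inl]; omega) (adj_inr_inl.mpr (Or.inl rfl))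
      (by simp only [adj_inl_inl]; omega)

end KnPlus

theorem stmt6 (n : ℕ) (hn : 4 ≤ n) :
    strongVertexSpan (KnPlus n) = 2 ∧ strongEdgeSpan (KnPlus n) = 2 := by
  refine strongSpans_eq_of_forall_dist_le KnPlus.dist_le_two ?_
  obtain ⟨c, hc₀, hc₁⟩ : ∃ c : Fin n, c.val ≠ 0 ∧ c.val ≠ n - 1 :=
    ⟨⟨1, by omega⟩, one_ne_zero, by rw [Fin.val_mk]; omega⟩
  have : Nontrivial (Fin n ⊕ Unit) := ⟨.inr (), .inl c, Sum.inr_ne_inl⟩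
  obtain ⟨p, hsupp, hedges⟩ :=
    (KnPlus.preconnected (n := n)).exists_walk_covering (.inl ⟨0, by omega⟩) (.inr ())
  refine exists_lazySweeps_mDist_eq (KnPlus.antipode c) (KnPlus.lazyAdj_antipode hc₀ hc₁)
    (KnPlus.dist_antipode hc₀ hc₁) p hsupp hedges (Or.inl ?_) (Or.inl ?_)
  · simp [KnPlus.antipode]
  · simp only [KnPlus.antipode, KnPlus.adj_inl_inl]
    omega
end
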